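/- Let (G, w) be a weighted tournament, p ∈ V(G), and u, v vertices such that {p, u, v} form a directed triangle and w(v) ≤ w(u). Define w' by w'(v) = 0, w'(u) = w(u) − w(v), and w'(x) = w(x) otherwise. Then for every 2-approximate p-disjoint solution R of (G − v, w'), the set R ∪ {v} is a 2-approximate p-disjoint solution of (G, w). -/

import Mathlib

/-!
Local ratio. Write `w = w' + w(v)·𝟙_{u,v}`. Every `p`-disjoint FVS of `G` meets the triangle
`{p, u, v}` outside `p`, so it pays at least `w(v)` more under `w` than under `w'`, whereas
`R ∪ {v}` pays at most `2·w(v)` more. Moreover, deleting `v` from a `p`-disjoint FVS of `G`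
gives one of `G - v` of no larger `w'`-weight, so the optimum of `(G - v, w')` is at most
the `w'`-weight of any optimal `p`-disjoint solution of `(G, w)`.
-/

open Finset

variable {V : Type*}

/-- A digraph (given by its arc relation) is acyclic if no vertex lies on a directed cycle. -/
def Acyclic (E : V → V → Prop) : Prop := ∀ v, ¬ Relation.TransGen E v v

/-- The digraph obtained by deleting the vertex set `X`. -/
def Delete [DecidableEq V] (E : V → V → Prop) (X : Finset V) : V → V → Prop :=
  fun a b => a ∉ X ∧ b ∉ X ∧ E a b

/-- The subgraph induced on the vertex set `A`. -/
def Induce [DecidableEq V] (E : V → V → Prop) (A : Finset V) : V → V → Prop :=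
  fun a b => a ∈ A ∧ b ∈ A ∧ E a b

/-- `S` is a feedback vertex set of the digraph `E`. -/
def IsFVS [DecidableEq V] (E : V → V → Prop) (S : Finset V) : Prop :=
  Acyclic (Delete E S)

/-- A tournament: no self-loops and exactly one arc between any two distinct vertices. -/
def IsTournament (E : V → V → Prop) : Prop :=
  (∀ v, ¬ E v v) ∧ ∀ u v, u ≠ v → (E u v ↔ ¬ E v u)

/-- Weight of a vertex set. -/
def weight (w : V → ℕ) (S : Finset V) : ℕ := ∑ v ∈ S, w v

/-- Out-neighborhood. -/
def Nout [Fintype V] [DecidableEq V] (E : V → V → Prop) [DecidableRel E] (p : V) : Finset V :=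
  Finset.univ.filter (fun u => E p u)

/-- In-neighborhood. -/
def Nin [Fintype V] [DecidableEq V] (E : V → V → Prop) [DecidableRel E] (p : V) : Finset V :=
  Finset.univ.filter (fun u => E u p)

/-- `S` is a minimum-weight FVS of `(E, w)`. -/
def IsOptFVS [DecidableEq V] (E : V → V → Prop) (w : V → ℕ) (S : Finset V) : Prop :=
  IsFVS E S ∧ ∀ S', IsFVS E S' → weight w S ≤ weight w S'

/-- `S` is a `p`-disjoint FVS of `E`. -/
def IsPDisjFVS [DecidableEq V] (E : V → V → Prop) (p : V) (S : Finset V) : Prop :=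
  IsFVS E S ∧ p ∉ S

/-- `S` is a minimum-weight `p`-disjoint FVS of `(E, w)`. -/
def IsOptPDisjFVS [DecidableEq V] (E : V → V → Prop) (w : V → ℕ) (p : V) (S : Finset V) : Prop :=
  IsPDisjFVS E p S ∧ ∀ S', IsPDisjFVS E p S' → weight w S ≤ weight w S'

/-- `S` is a 2-approximate solution of `(E, w)`. -/
def TwoApproxFVS [DecidableEq V] (E : V → V → Prop) (w : V → ℕ) (S : Finset V) : Prop :=
  IsFVS E S ∧ ∀ S', IsOptFVS E w S' → weight w S ≤ 2 * weight w S'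

/-- `S` is a 2-approximate `p`-disjoint solution of `(E, w)`. -/
def TwoApproxPDisj [DecidableEq V] (E : V → V → Prop) (w : V → ℕ) (p : V) (S : Finset V) : Prop :=
  IsPDisjFVS E p S ∧ ∀ S', IsOptPDisjFVS E w p S' → weight w S ≤ 2 * weight w S'

/-- `l` is a topological sort of the subgraph of `E` induced on the vertex set `A`. -/
def IsTopoOn [DecidableEq V] (E : V → V → Prop) (A : Finset V) (l : List V) : Prop :=
  l.Nodup ∧ (∀ v, v ∈ l ↔ v ∈ A) ∧
    ∀ (i j : ℕ) (hi : i < l.length) (hj : j < l.length),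
      E (l.get ⟨i, hi⟩) (l.get ⟨j, hj⟩) → i < j

theorem Acyclic.mono {E E' : V → V → Prop} (h : ∀ a b, E' a b → E a b) (hE : Acyclic E) :
    Acyclic E' :=
  fun x hx => hE x (Relation.TransGen.mono h x x hx)

section FVS

variable [DecidableEq V] {E : V → V → Prop}

theorem IsFVS.mono {S T : Finset V} (hS : IsFVS E S) (hST : S ⊆ T) : IsFVS E T :=
  Acyclic.mono (fun _ _ ⟨ha, hb, hab⟩ => ⟨fun h => ha (hST h), fun h => hb (hST h), hab⟩) hS

theorem delete_delete (X Y : Finset V) : Delete (Delete E X) Y = Delete E (Y ∪ X) := by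
  funext a b
  simp only [Delete, mem_union, not_or, eq_iff_iff]
  tauto

theorem isFVS_delete_iff {X Y : Finset V} : IsFVS (Delete E X) Y ↔ IsFVS E (Y ∪ X) := by
  rw [IsFVS, IsFVS, delete_delete]

theorem IsFVS.mem_or_mem_of_triangle {p u v : V} {S : Finset V}
    (htri : (E p u ∧ E u v ∧ E v p) ∨ (E p v ∧ E v u ∧ E u p))
    (hS : IsFVS E S) (hp : p ∉ S) : u ∈ S ∨ v ∈ S := by
  by_contra! ⟨hu, hv⟩
  rcases htri with ⟨hpu, huv, hvp⟩ | ⟨hpv, hvu, hup⟩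
  · exact hS p <| .head ⟨hp, hu, hpu⟩ <| .head ⟨hu, hv, huv⟩ <| .single ⟨hv, hp, hvp⟩
  · exact hS p <| .head ⟨hp, hv, hpv⟩ <| .head ⟨hv, hu, hvu⟩ <| .single ⟨hu, hp, hup⟩

theorem exists_isOptPDisjFVS (w : V → ℕ) {p : V} (h : ∃ S, IsPDisjFVS E p S) :
    ∃ S, IsOptPDisjFVS E w p S := by
  obtain ⟨S, hS⟩ := h
  let s : Set (Finset V) := {S | IsPDisjFVS E p S}
  exact ⟨Function.argminOn (weight w) s ⟨S, hS⟩, Function.argminOn_mem (weight w) s _,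
    fun _ hS' => Function.argminOn_le (weight w) s hS'⟩

theorem IsPDisjFVS.sdiff_singleton {p v : V} {S : Finset V} (hS : IsPDisjFVS E p S) :
    IsPDisjFVS (Delete E {v}) p (S \ {v}) := by
  refine ⟨?_, fun hp => hS.2 (mem_sdiff.1 hp).1⟩
  rw [isFVS_delete_iff, sdiff_union_self_eq_union]
  exact hS.1.mono subset_union_left

end FVS

theorem weight_eq_add_mul_card_inter [DecidableEq V] {w w' : V → ℕ} {T : Finset V} {c : ℕ}
    (hw : ∀ x, w x = w' x + if x ∈ T then c else 0) (X : Finset V) :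
    weight w X = weight w' X + c * #(X ∩ T) := by
  simp only [weight, hw, sum_add_distrib, sum_ite_mem, sum_const, smul_eq_mul, mul_comm]

theorem stmt7 [DecidableEq V] (E : V → V → Prop)
    (w : V → ℕ) (p u v : V)
    (hpv : p ≠ v)
    (htri : (E p u ∧ E u v ∧ E v p) ∨ (E p v ∧ E v u ∧ E u p))
    (hw : w v ≤ w u)
    (w' : V → ℕ) (hw'v : w' v = 0) (hw'u : w' u = w u - w v)
    (hw'x : ∀ x, x ≠ u → x ≠ v → w' x = w x)
    (R : Finset V)
    (hR : TwoApproxPDisj (Delete E {v}) w' p R) :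
    TwoApproxPDisj E w p (R ∪ {v}) := by
  have hsplit : ∀ x, w x = w' x + if x ∈ ({u, v} : Finset V) then w v else 0 := by
    intro x
    by_cases hxu : x = u
    · subst hxu; simp only [hw'u, mem_insert_self, if_true]; omega
    by_cases hxv : x = v
    · simp [hxv, hw'v]
    · simp [hxu, hxv, hw'x x hxu hxv]
  refine ⟨⟨isFVS_delete_iff.1 hR.1.1, by simp [hR.1.2, hpv]⟩, fun S' hS' => ?_⟩
  obtain ⟨S₀, hS₀⟩ := exists_isOptPDisjFVS w' ⟨_, hS'.1.sdiff_singleton (v := v)⟩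
  have hS'meets : 1 ≤ #(S' ∩ {u, v}) := by
    rcases hS'.1.1.mem_or_mem_of_triangle htri hS'.1.2 with hu | hv
    · exact card_pos.2 ⟨u, by simp [hu]⟩
    · exact card_pos.2 ⟨v, by simp [hv]⟩
  have hRv : weight w' (R ∪ {v}) = weight w' R := by
    rw [union_singleton]; exact sum_insert_of_eq_zero_if_notMem fun _ => hw'v
  calc weight w (R ∪ {v})
      = weight w' R + w v * #((R ∪ {v}) ∩ {u, v}) := by
        rw [weight_eq_add_mul_card_inter hsplit, hRv]
    _ ≤ 2 * weight w' S₀ + w v * 2 :=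
        add_le_add (hR.2 S₀ hS₀) <| Nat.mul_le_mul_left _ <|
          (card_le_card inter_subset_right).trans card_le_two
    _ ≤ 2 * weight w' S' + 2 * (w v * #(S' ∩ {u, v})) := by
        rw [mul_comm (w v)]
        gcongr
        · exact (hS₀.2 _ hS'.1.sdiff_singleton).trans (sum_le_sum_of_subset sdiff_subset)
        · exact Nat.le_mul_of_pos_right _ hS'meets
    _ = 2 * weight w S' := by rw [weight_eq_add_mul_card_inter hsplit]; ring
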